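/- Let m ≥ 1 and (M, g) a compact Riemannian manifold with boundary. If the mixing ray transform I_A is solenoidally injective for some mixing A of degree m, then I_Ã is solenoidally injective for every mixing Ã of degree m. -/

import Mathlib

open Manifold MeasureTheory

noncomputable section

/-- Covariant `m`-tensors on the (trivialised) tangent space `E`. -/
abbrev Tens (E : Type*) [NormedAddCommGroup E] [NormedSpace ℝ E] (m : ℕ) :=
  ContinuousMultilinearMap ℝ (fun _ : Fin m => E) ℝ

variable {E : Type*} [NormedAddCommGroup E] [NormedSpace ℝ E]

/-- Symmetrisation of an `m`-tensor. -/
noncomputable def symmTens {m : ℕ} (h : Tens E m) : Tens E m :=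
  ((m.factorial : ℝ)⁻¹) • ∑ π : Equiv.Perm (Fin m), h.domDomCongr π

/-- A tensor is symmetric if it is invariant under permutations of its arguments. -/
def IsSymmTens {m : ℕ} (h : Tens E m) : Prop :=
  ∀ π : Equiv.Perm (Fin m), h.domDomCongr π = h

variable {H : Type*} [TopologicalSpace H] {I : ModelWithCorners ℝ E H}
  {M : Type*} [TopologicalSpace M] [ChartedSpace H M]

/-- Application of a mixing `A = (A₁,…,A_m)` (a smooth family of fibrewise linear
bijections of the tangent spaces) to an `m`-tensor field:
`(Ah)ₓ(ξ₁,…,ξ_m) = hₓ(A₁(x)ξ₁,…,A_m(x)ξ_m)`. -/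
noncomputable def applyMixing {m : ℕ} (A : Fin m → M → (E ≃L[ℝ] E))
    (h : M → Tens E m) : M → Tens E m :=
  fun x => (h x).compContinuousLinearMap fun i => ((A i x : E →L[ℝ] E))

/-- The inverse mixing `A⁻¹`. -/
noncomputable def invMixing {m : ℕ} (A : Fin m → M → (E ≃L[ℝ] E)) :
    Fin m → M → (E ≃L[ℝ] E) :=
  fun i x => (A i x).symm

/-- The generalised symmetrisation `σ̂_A = A⁻¹ ∘ σ ∘ A`. -/
noncomputable def sigmaHat {m : ℕ} (A : Fin m → M → (E ≃L[ℝ] E))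
    (h : M → Tens E m) : M → Tens E m :=
  applyMixing (invMixing A) (fun x => symmTens (applyMixing A h x))

/-- A mixing is smooth if each family of linear bijections is smooth. -/
def SmoothMixing {m : ℕ} (I : ModelWithCorners ℝ E H) (M : Type*) [TopologicalSpace M]
    [ChartedSpace H M] (A : Fin m → M → (E ≃L[ℝ] E)) : Prop :=
  ∀ i : Fin m, ContMDiff I 𝓘(ℝ, E →L[ℝ] E) (⊤ : ℕ∞) (fun x : M => ((A i x : E →L[ℝ] E)))

/-- A family of curves in `M` (in applications: the maximal geodesics of a Riemannian
metric `g`, parametrised on `[0, T γ]`). -/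
structure CurveFamily (I : ModelWithCorners ℝ E H) (M : Type*) [TopologicalSpace M]
    [ChartedSpace H M] where
  Geo : Type
  curve : Geo → ℝ → M
  time : Geo → ℝ

/-- The (geodesic) ray transform of an `m`-tensor field along the curve family:
`I_m h (γ) = ∫₀^{T γ} h_{γ(t)}(γ̇(t),…,γ̇(t)) dt`. -/
noncomputable def rayTransform {m : ℕ} (Γ : CurveFamily I M) (h : M → Tens E m)
    (γ : Γ.Geo) : ℝ :=
  ∫ t in (0 : ℝ)..(Γ.time γ),
    (h (Γ.curve γ t)) (fun _ => (mfderiv 𝓘(ℝ, ℝ) I (Γ.curve γ) t (1 : ℝ) : E))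

/-- Smooth tensor fields. -/
def SmoothTensField (I : ModelWithCorners ℝ E H) {M : Type*} [TopologicalSpace M]
    [ChartedSpace H M] {m : ℕ} (h : M → Tens E m) : Prop :=
  ContMDiff I 𝓘(ℝ, Tens E m) (⊤ : ℕ∞) h

/-!
STATEMENT 14: Let `m ≥ 1` and `(M,g)` a compact Riemannian manifold with boundary.
If the mixing ray transform `I_A = I_m ∘ A` is solenoidally injective for some
mixing `A` of degree `m`, then `I_Ã` is solenoidally injective for every mixing `Ã`
of degree `m`.

The geodesics of `g` are abstracted as a curve family `Γ` and the covariant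
derivative of `g` (its symmetrised version acts on symmetric tensors) as an
operator `nabla` from `(m-1)`-tensor fields to `m`-tensor fields; `I_A` is
solenoidally injective if for every smooth `m`-tensor field `h`: `I_A h = 0` iff
`σ̂_A h = σ̂_A ∇^A v` for some smooth symmetric `(m-1)`-tensor field `v` vanishing
on the boundary `∂M`, where `σ̂_A = A⁻¹ ∘ σ ∘ A` and `∇^A = A⁻¹ ∘ ∇`.
-/

/-- Solenoidal injectivity of the mixing ray transform `I_A = I_m ∘ A`. -/
def SInjectiveMixing {E : Type*} [NormedAddCommGroup E] [NormedSpace ℝ E]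
    {H : Type*} [TopologicalSpace H] (I : ModelWithCorners ℝ E H)
    (M : Type*) [TopologicalSpace M] [ChartedSpace H M]
    {m : ℕ} (Γ : CurveFamily I M)
    (nabla : (M → Tens E (m - 1)) → (M → Tens E m))
    (A : Fin m → M → (E ≃L[ℝ] E)) : Prop :=
  ∀ h : M → Tens E m, SmoothTensField I h →
    ((∀ γ : Γ.Geo, rayTransform Γ (applyMixing A h) γ = 0) ↔
      ∃ v : M → Tens E (m - 1), SmoothTensField I v ∧ (∀ x, IsSymmTens (v x)) ∧
        (∀ x ∈ I.boundary M, v x = 0) ∧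
        sigmaHat A h = sigmaHat A (applyMixing (invMixing A) (nabla v)))

/-!
Solenoidal injectivity of `I_A` does not depend on the mixing: for a smooth mixing `A`,
`h ↦ A h` is a bijection of the smooth tensor fields with `I_A h = I_m (A h)`, and since
`A⁻¹` is injective, `σ̂_A h = σ̂_A ∇^A v` holds iff `σ (A h) = σ (∇ v)`. Hence `I_A` is
solenoidally injective iff `I_m` is.

The one analytic input is the smoothness of `x ↦ A(x)⁻¹`. As `E` need not be complete,
`Ring.inverse` on `E →L[ℝ] E` is not available as a smooth map; instead, pointwise
inverses are controlled through the identity `g y - b = g y * (a - f y) * b`.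
-/

open Filter Asymptotics Topology

theorem mul_sub_mul_eq_sub_of_mul_eq_one {R : Type*} [Ring R] {a b c d : R}
    (hca : c * a = 1) (hbd : b * d = 1) : c * (b - a) * d = c - d := by
  rw [mul_sub, sub_mul, mul_assoc, hbd, hca, mul_one, one_mul]

section NormedRing

variable {R : Type*} [NormedRing R]

theorem Filter.Tendsto.of_mul_eq_one {α : Type*} {l : Filter α} {f g : α → R} {a b : R}
    (hf : Tendsto f l (𝓝 a)) (hgf : ∀ᶠ y in l, g y * f y = 1) (hab : a * b = 1) :
    Tendsto g l (𝓝 b) := by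
  set δ := fun y => (a - f y) * b
  have hδ : Tendsto δ l (𝓝 0) := by
    simpa using ((tendsto_const_nhds (x := a)).sub hf).mul_const b
  have hg : ∀ᶠ y in l, g y - b = g y * δ y := by
    filter_upwards [hgf] with y hy
    rw [← mul_assoc, mul_sub_mul_eq_sub_of_mul_eq_one hy hab]
  have hbdd : IsBoundedUnder (· ≤ ·) l (fun y => ‖g y‖) := by
    refine ⟨2 * ‖b‖, eventually_map.2 ?_⟩
    filter_upwards [hg, (tendsto_zero_iff_norm_tendsto_zero.1 hδ).eventually_le_const
      (by norm_num : (0 : ℝ) < 1 / 2)] with y hy hδy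
    have : ‖g y‖ - ‖b‖ ≤ ‖g y‖ * (1 / 2) :=
      calc ‖g y‖ - ‖b‖ ≤ ‖g y * δ y‖ := hy ▸ norm_sub_norm_le (g y) b
        _ ≤ ‖g y‖ * ‖δ y‖ := norm_mul_le _ _
        _ ≤ ‖g y‖ * (1 / 2) := by gcongr
    linarith
  rw [tendsto_iff_norm_sub_tendsto_zero, ← tendsto_zero_iff_norm_tendsto_zero]
  exact (isBoundedUnder_le_mul_tendsto_zero hbdd hδ).congr' (hg.mono fun y hy => hy.symm)

theorem ContinuousOn.of_mul_eq_one {X : Type*} [TopologicalSpace X] {f g : X → R} {s : Set X}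
    (hf : ContinuousOn f s) (hgf : ∀ y ∈ s, g y * f y = 1) (hfg : ∀ y ∈ s, f y * g y = 1) :
    ContinuousOn g s :=
  fun y hy => (hf y hy).of_mul_eq_one (eventually_nhdsWithin_of_forall hgf) (hfg y hy)

end NormedRing

section NormedAlgebra

variable {𝕜 : Type*} [NontriviallyNormedField 𝕜] {F : Type*} [NormedAddCommGroup F]
  [NormedSpace 𝕜 F] {𝔸 : Type*} [NormedRing 𝔸] [NormedAlgebra 𝕜 𝔸]

theorem HasFDerivWithinAt.mul_of_continuousWithinAt_of_eq_zero {c φ : F → 𝔸}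
    {φ' : F →L[𝕜] 𝔸} {s : Set F} {x : F}
    (hc : ContinuousWithinAt c s x) (hφ : HasFDerivWithinAt φ φ' s x) (hφx : φ x = 0) :
    HasFDerivWithinAt (fun y => c y * φ y) (c x • φ') s x := by
  have hc0 : (fun y => c y - c x) =o[𝓝[s] x] fun _ => (1 : ℝ) :=
    (isLittleO_one_iff ℝ).2 (tendsto_sub_nhds_zero_iff.2 hc)
  have hφO : φ =O[𝓝[s] x] fun y => ‖y - x‖ := by
    simpa [hφx] using hφ.isBigO_sub.norm_right
  have hprod : (fun y => (c y - c x) * φ y) =o[𝓝[s] x] fun y => y - x := by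
    simpa only [one_mul, isLittleO_norm_right] using hc0.mul_isBigO hφO
  have hlin : (fun y => c x * (φ y - φ x - φ' (y - x))) =o[𝓝[s] x] fun y => y - x :=
    hφ.isLittleO.const_mul_left (c x)
  refine HasFDerivWithinAt.of_isLittleO <| (hprod.add hlin).congr_left fun y => ?_
  simp only [smul_apply, smul_eq_mul, hφx]
  noncomm_ring

theorem HasFDerivWithinAt.of_mul_eq_one {f g : F → 𝔸} {f' : F →L[𝕜] 𝔸} {s : Set F}
    {x : F} (hf : HasFDerivWithinAt f f' s x) (hg : ContinuousWithinAt g s x)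
    (hgf : ∀ y ∈ s, g y * f y = 1) (hfg : f x * g x = 1) :
    HasFDerivWithinAt g (-(ContinuousLinearMap.mulLeftRight 𝕜 𝔸 (g x) (g x)).comp f') s x := by
  have hφ : HasFDerivWithinAt (fun y => f x - f y) (-f') s x := by
    simpa using hf.const_sub (f x)
  -- on `s`, `g y = g x + g y * (f x - f y) * g x`, whose middle factor vanishes at `x`
  have hexp :=
    ((mul_of_continuousWithinAt_of_eq_zero hg hφ (sub_self _)).mul_const' (g x)).const_add (g x)
  refine (hexp.congr_of_eventuallyEq ?_ (by simp)).congr_fderiv (by ext; simp)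
  filter_upwards [self_mem_nhdsWithin] with y hy
  rw [mul_sub_mul_eq_sub_of_mul_eq_one (hgf y hy) hfg, add_sub_cancel]

theorem ContDiffOn.of_mul_eq_one {f g : F → 𝔸} {s : Set F} {n : ℕ∞}
    (hs : UniqueDiffOn 𝕜 s) (hf : ContDiffOn 𝕜 n f s) (hgf : ∀ y ∈ s, g y * f y = 1)
    (hfg : ∀ y ∈ s, f y * g y = 1) : ContDiffOn 𝕜 n g s := by
  suffices ∀ k : ℕ, ContDiffOn 𝕜 k f s → ContDiffOn 𝕜 k g s from
    contDiffOn_iff_forall_nat_le.2 fun k hk => this k (hf.of_le (mod_cast hk))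
  intro k
  induction k with
  | zero => simpa using fun hf₀ => hf₀.of_mul_eq_one hgf hfg
  | succ k ih =>
    intro hfk
    have hgk : ContDiffOn 𝕜 k g s := ih (hfk.of_le (by simp))
    have hg' : ∀ y ∈ s, HasFDerivWithinAt g
        (-(ContinuousLinearMap.mulLeftRight 𝕜 𝔸 (g y) (g y)).comp (fderivWithin 𝕜 f s y)) s y :=
      fun y hy => (hfk.differentiableOn (by simp) y hy).hasFDerivWithinAt.of_mul_eq_one
        (hgk.continuousOn y hy) hgf (hfg y hy)
    have hf' : ContDiffOn 𝕜 k (fderivWithin 𝕜 f s) s := hfk.fderivWithin hs (by simp)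
    refine contDiffOn_succ_of_fderivWithin (n := k)
      (fun y hy => (hg' y hy).differentiableWithinAt) (fun h => by simp at h) ?_
    refine (((ContinuousLinearMap.mulLeftRight 𝕜 𝔸).contDiff.comp_contDiffOn hgk).clm_apply
      hgk |>.clm_comp hf' |>.neg).congr fun y hy => ?_
    exact (hg' y hy).fderivWithin (hs y hy)

end NormedAlgebra

section ManifoldInverse

variable {𝔸 : Type*} [NormedRing 𝔸] [NormedAlgebra ℝ 𝔸]

theorem ContMDiff.of_mul_eq_one {n : ℕ∞} [IsManifold I n M] {f g : M → 𝔸}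
    (hf : ContMDiff I 𝓘(ℝ, 𝔸) n f) (hgf : ∀ x, g x * f x = 1) (hfg : ∀ x, f x * g x = 1) :
    ContMDiff I 𝓘(ℝ, 𝔸) n g := by
  rw [contMDiff_iff] at hf ⊢
  have hg : Continuous g := continuousOn_univ.1 <|
    hf.1.continuousOn.of_mul_eq_one (fun y _ => hgf y) (fun y _ => hfg y)
  refine ⟨hg, fun x y => ?_⟩
  have hfx := hf.2 x y
  simp only [extChartAt_model_space_eq_id, PartialEquiv.refl_coe, PartialEquiv.refl_source,
    Set.preimage_univ, Set.inter_univ, Function.id_comp] at hfx ⊢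
  exact hfx.of_mul_eq_one (uniqueDiffOn_extChartAt_target x) (fun _ _ => hgf _)
    (fun _ _ => hfg _)

theorem ContMDiff.continuousLinearEquiv_symm {n : ℕ∞} [IsManifold I n M] {F : Type*}
    [NormedAddCommGroup F] [NormedSpace ℝ F] {A : M → F ≃L[ℝ] F}
    (hA : ContMDiff I 𝓘(ℝ, F →L[ℝ] F) n fun x => (A x : F →L[ℝ] F)) :
    ContMDiff I 𝓘(ℝ, F →L[ℝ] F) n fun x => ((A x).symm : F →L[ℝ] F) :=
  hA.of_mul_eq_one (fun x => by ext; simp) (fun x => by ext; simp)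

end ManifoldInverse

section Mixing

variable {m : ℕ}

omit [TopologicalSpace M] in
theorem leftInverse_applyMixing_invMixing (A : Fin m → M → (E ≃L[ℝ] E)) :
    Function.LeftInverse (applyMixing A) (applyMixing (invMixing A)) := fun h => by
  funext x
  ext ξ
  simp [applyMixing, invMixing]

omit [TopologicalSpace M] in
theorem sigmaHat_eq_sigmaHat_invMixing_iff (A : Fin m → M → (E ≃L[ℝ] E))
    (h u : M → Tens E m) :
    sigmaHat A h = sigmaHat A (applyMixing (invMixing A) u) ↔
      (fun x => symmTens (applyMixing A h x)) = fun x => symmTens (u x) := by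
  rw [sigmaHat, sigmaHat, leftInverse_applyMixing_invMixing A u]
  exact (leftInverse_applyMixing_invMixing A).injective.eq_iff

theorem SmoothMixing.invMixing [IsManifold I (⊤ : ℕ∞) M] {A : Fin m → M → (E ≃L[ℝ] E)}
    (hA : SmoothMixing I M A) : SmoothMixing I M (invMixing A) :=
  fun i => (hA i).continuousLinearEquiv_symm

theorem SmoothTensField.applyMixing {A : Fin m → M → (E ≃L[ℝ] E)} (hA : SmoothMixing I M A)
    {h : M → Tens E m} (hh : SmoothTensField I h) : SmoothTensField I (applyMixing A h) := by
  have hΦ : ContDiff ℝ (⊤ : ℕ∞)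
      (ContinuousMultilinearMap.compContinuousLinearMapContinuousMultilinear ℝ
        (fun _ : Fin m => E) (fun _ : Fin m => E) ℝ) :=
    ContinuousMultilinearMap.contDiff _
  exact (hΦ.comp_contMDiff (contMDiff_pi_space.2 hA)).clm_apply hh

end Mixing

def SInjective (I : ModelWithCorners ℝ E H) (M : Type*) [TopologicalSpace M]
    [ChartedSpace H M] {m : ℕ} (Γ : CurveFamily I M)
    (nabla : (M → Tens E (m - 1)) → (M → Tens E m)) : Prop :=
  ∀ k : M → Tens E m, SmoothTensField I k →
    ((∀ γ : Γ.Geo, rayTransform Γ k γ = 0) ↔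
      ∃ v : M → Tens E (m - 1), SmoothTensField I v ∧ (∀ x, IsSymmTens (v x)) ∧
        (∀ x ∈ I.boundary M, v x = 0) ∧
        (fun x => symmTens (k x)) = fun x => symmTens (nabla v x))

theorem sInjectiveMixing_iff_sInjective [IsManifold I (⊤ : ℕ∞) M] {m : ℕ}
    {Γ : CurveFamily I M} {nabla : (M → Tens E (m - 1)) → (M → Tens E m)}
    {A : Fin m → M → (E ≃L[ℝ] E)}
    (hA : SmoothMixing I M A) : SInjectiveMixing I M Γ nabla A ↔ SInjective I M Γ nabla := by
  simp only [SInjectiveMixing, SInjective, sigmaHat_eq_sigmaHat_invMixing_iff]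
  refine ⟨fun hinj k hk => ?_, fun hinj h hh => hinj _ (hh.applyMixing hA)⟩
  simpa only [leftInverse_applyMixing_invMixing A k] using hinj _ (hk.applyMixing hA.invMixing)

theorem sinjectivity_transfer_between_mixings_general
    {E : Type*} [NormedAddCommGroup E] [NormedSpace ℝ E]
    {H : Type*} [TopologicalSpace H] (I : ModelWithCorners ℝ E H)
    (M : Type*) [TopologicalSpace M] [ChartedSpace H M] [IsManifold I (⊤ : ℕ∞) M]
    (m : ℕ)
    (Γ : CurveFamily I M) (nabla : (M → Tens E (m - 1)) → (M → Tens E m))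
    (A Atil : Fin m → M → (E ≃L[ℝ] E))
    (hA : SmoothMixing I M A) (hAtil : SmoothMixing I M Atil)
    (hinj : SInjectiveMixing I M Γ nabla A) :
    SInjectiveMixing I M Γ nabla Atil :=
  (sInjectiveMixing_iff_sInjective hAtil).2 ((sInjectiveMixing_iff_sInjective hA).1 hinj)

theorem sinjectivity_transfer_between_mixings
    {E : Type*} [NormedAddCommGroup E] [NormedSpace ℝ E]
    {H : Type*} [TopologicalSpace H] (I : ModelWithCorners ℝ E H)
    (M : Type*) [TopologicalSpace M] [ChartedSpace H M] [IsManifold I (⊤ : ℕ∞) M]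
    [CompactSpace M]
    (m : ℕ) (hm : 1 ≤ m)
    (Γ : CurveFamily I M) (nabla : (M → Tens E (m - 1)) → (M → Tens E m))
    (A Atil : Fin m → M → (E ≃L[ℝ] E))
    (hA : SmoothMixing I M A) (hAtil : SmoothMixing I M Atil)
    (hinj : SInjectiveMixing I M Γ nabla A) :
    SInjectiveMixing I M Γ nabla Atil :=
  sinjectivity_transfer_between_mixings_general I M m Γ nabla A Atil hA hAtil hinj
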